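/- For every c ∈ Z_p^×, the power series λ_+·γ_c(λ_+)^{−1} and λ_−·γ_c(λ_−)^{−1} lie in 1 + π·Z_p[[π]]; that is, all their coefficients lie in Z_p and their constant coefficients equal 1. -/

import Mathlib

open PowerSeries Filter Finset

noncomputable section

variable (p : ℕ) [Fact p.Prime]

/-- Substitution of a power series `g` (with zero constant coefficient in all our uses)
into a power series `f`: the coefficient of degree `j` of `f(g)` only involves the
monomials of `f` of degree `≤ j`. -/
def psSubst {A : Type*} [CommRing A] (g f : PowerSeries A) : PowerSeries A :=
  PowerSeries.mk fun j => ∑ i ∈ Finset.range (j + 1),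
    PowerSeries.coeff (R := A) i f * PowerSeries.coeff (R := A) j (g ^ i)

/-- The endomorphism `φ` of `A[[π]]`, substituting `(1+π)^p - 1` for `π`. -/
def phiA (A : Type*) [CommRing A] : PowerSeries A → PowerSeries A :=
  psSubst ((1 + PowerSeries.X) ^ p - 1)

/-- The binomial coefficient `binom(c, n)` for `c ∈ ℤ_p`, computed in `ℚ_p`. -/
def binomC (c : ℤ_[p]) (n : ℕ) : ℚ_[p] :=
  Polynomial.eval (c : ℚ_[p]) (descPochhammer ℚ_[p] n) / (n.factorial : ℚ_[p])

/-- The binomial power series `(1+π)^c = ∑_{n≥0} binom(c,n) π^n` for `c ∈ ℤ_p`. -/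
def onePlusPiPow (c : ℤ_[p]) : PowerSeries ℚ_[p] := PowerSeries.mk (binomC p c)

/-- The endomorphism `γ_c` of `ℚ_p[[π]]`, substituting `(1+π)^c - 1` for `π`. -/
def gammaQ (c : ℤ_[p]) : PowerSeries ℚ_[p] → PowerSeries ℚ_[p] :=
  psSubst (onePlusPiPow p c - 1)

/-- The partial products `∏_{n=0}^{N} φ^{2n+1}(q)/p` (whose limit is `λ₊`). -/
def partialPlus (q : PowerSeries ℚ_[p]) (N : ℕ) : PowerSeries ℚ_[p] :=
  ∏ n ∈ Finset.range (N + 1), (p : ℚ_[p])⁻¹ • (phiA p ℚ_[p])^[2 * n + 1] q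

/-- The partial products `∏_{n=0}^{N} φ^{2n}(q)/p` (whose limit is `λ₋`). -/
def partialMinus (q : PowerSeries ℚ_[p]) (N : ℕ) : PowerSeries ℚ_[p] :=
  ∏ n ∈ Finset.range (N + 1), (p : ℚ_[p])⁻¹ • (phiA p ℚ_[p])^[2 * n] q

/-- Convergence in `ℚ_p[[π]]` for the topology of coefficientwise convergence. -/
def CoeffTendsto (F : ℕ → PowerSeries ℚ_[p]) (L : PowerSeries ℚ_[p]) : Prop :=
  ∀ d : ℕ, Filter.Tendsto (fun N => PowerSeries.coeff (R := ℚ_[p]) d (F N))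
    Filter.atTop (nhds (PowerSeries.coeff (R := ℚ_[p]) d L))

/-- A power series with `ℚ_p` coefficients has all its coefficients in `ℤ_p`. -/
def IntSeries (f : PowerSeries ℚ_[p]) : Prop := ∀ n, ‖PowerSeries.coeff (R := ℚ_[p]) n f‖ ≤ 1

/-- Membership in the ring `R` of series `∑ a_i π^i` with `v_p(a_i) + i/(p-1) ≥ 0`,
expressed via norms: `‖a_i‖ ≤ p^{i/(p-1)}`. -/
def memR (f : PowerSeries ℚ_[p]) : Prop :=
  ∀ i : ℕ, ‖PowerSeries.coeff (R := ℚ_[p]) i f‖ ≤ (p : ℝ) ^ ((i : ℝ) / ((p : ℝ) - 1))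

/-- The series `p^m λ₋^{k-1} λ₊^{-(k-1)}`, where `m = ⌊(k-2)/(p-1)⌋`. -/
def zFull (k : ℕ) (lamPlus lamMinus : PowerSeries ℚ_[p]) : PowerSeries ℚ_[p] :=
  (p : PowerSeries ℚ_[p]) ^ ((k - 2) / (p - 1)) * lamMinus ^ (k - 1) * lamPlus⁻¹ ^ (k - 1)

/-- The truncation `z = z_0 + z_1 π + ⋯ + z_{k-2} π^{k-2}` of `p^m λ₋^{k-1} λ₊^{-(k-1)}`. -/
def zSeries (k : ℕ) (lamPlus lamMinus : PowerSeries ℚ_[p]) : PowerSeries ℚ_[p] :=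
  PowerSeries.mk fun i =>
    if i ≤ k - 2 then PowerSeries.coeff (R := ℚ_[p]) i (zFull p k lamPlus lamMinus) else 0

/-- The two-variable power series ring `ℚ_p[[π, X]]`, realized as `(ℚ_p[[π]])[[X]]`:
the inner variable is `π` and the outer variable is `X`. -/
abbrev PS2 := PowerSeries (PowerSeries ℚ_[p])

/-- `φ` extended to `ℚ_p[[π, X]]`, acting as before on `π` and trivially on `X`. -/
def phi2 : PS2 p → PS2 p := fun F =>
  PowerSeries.mk fun n => phiA p ℚ_[p] (PowerSeries.coeff (R := (PowerSeries ℚ_[p])) n F)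

/-- `γ_c` extended to `ℚ_p[[π, X]]`, acting as before on `π` and trivially on `X`. -/
def gamma2 (c : ℤ_[p]) : PS2 p → PS2 p := fun F =>
  PowerSeries.mk fun n => gammaQ p c (PowerSeries.coeff (R := (PowerSeries ℚ_[p])) n F)

/-- A two-variable power series has all its coefficients in `ℤ_p`,
i.e. lies in `ℤ_p[[π, X]]`. -/
def IntSeries2 (F : PS2 p) : Prop :=
  ∀ n j, ‖PowerSeries.coeff (R := ℚ_[p]) j (PowerSeries.coeff (R := (PowerSeries ℚ_[p])) n F)‖ ≤ 1

/-- The element `π` of `ℚ_p[[π, X]]`. -/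
def piVar : PS2 p := PowerSeries.C (R := PowerSeries ℚ_[p]) PowerSeries.X

/-- The matrix `P(X)` with rows `(0, -1)` and `(q^{k-1}, X·z)`. -/
def Pmat (k : ℕ) (q z : PowerSeries ℚ_[p]) : Matrix (Fin 2) (Fin 2) (PS2 p) :=
  !![0, -1;
     PowerSeries.C (R := PowerSeries ℚ_[p]) (q ^ (k - 1)),
       PowerSeries.X * PowerSeries.C (R := PowerSeries ℚ_[p]) z]

/-- A matrix has entries in `ℤ_p[[π, X]]`. -/
def IntMat (H : Matrix (Fin 2) (Fin 2) (PS2 p)) : Prop := ∀ i j, IntSeries2 p (H i j)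

/-- A matrix is `≡ Id mod π`, i.e. `H - Id ∈ π · M₂(ℤ_p[[π, X]])`. -/
def ModPiId (H : Matrix (Fin 2) (Fin 2) (PS2 p)) : Prop :=
  ∃ H' : Matrix (Fin 2) (Fin 2) (PS2 p), IntMat p H' ∧ H = 1 + piVar p • H'

/-- The conditions satisfied by the matrix `G_c(X)`:
entries in `ℤ_p[[π,X]]`, `G ≡ Id mod π`, and `P(X)·φ(G) = G·γ_c(P(X))`. -/
def IsGmat (k : ℕ) (q z : PowerSeries ℚ_[p]) (c : ℤ_[p])
    (G : Matrix (Fin 2) (Fin 2) (PS2 p)) : Prop :=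
  IntMat p G ∧ ModPiId p G ∧
    Pmat p k q z * G.map (phi2 p) = G * (Pmat p k q z).map (gamma2 p c)

/-- The matrix `P₀` with rows `(0, -1)` and `(p^{k-1}, p^m X)`, `m = ⌊(k-2)/(p-1)⌋`. -/
def P0mat (k : ℕ) : Matrix (Fin 2) (Fin 2) (PowerSeries ℤ_[p]) :=
  !![0, -1;
     (p : PowerSeries ℤ_[p]) ^ (k - 1),
       (p : PowerSeries ℤ_[p]) ^ ((k - 2) / (p - 1)) * PowerSeries.X]

section Efield

variable (E : Type*) [NormedField E] [NormedAlgebra ℚ_[p] E] [IsUltrametricDist E]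

/-- The ring of integers `O_E` of `E`: the elements of norm at most `1`. -/
def ringOfInt : Subring E where
  carrier := {x : E | ‖x‖ ≤ 1}
  zero_mem' := by simp
  one_mem' := by simp
  add_mem' {a b} ha hb := le_trans (IsUltrametricDist.norm_add_le_max a b) (max_le ha hb)
  neg_mem' {a} ha := by simpa using ha
  mul_mem' {a b} ha hb := by
    have h := norm_mul a b
    simp only [Set.mem_setOf_eq] at *
    nlinarith [norm_nonneg a, norm_nonneg b]

/-- Evaluation `ev_α : ℚ_p[[π, X]] → E[[π]]` substituting `α` for `X`. -/
def evalX (α : E) (F : PS2 p) : PowerSeries E :=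
  PowerSeries.mk fun j =>
    ∑' n : ℕ, algebraMap ℚ_[p] E
      (PowerSeries.coeff (R := ℚ_[p]) j (PowerSeries.coeff (R := (PowerSeries ℚ_[p])) n F)) * α ^ n

/-- `γ_c` on `E[[π]]`: substitution of `(1+π)^c - 1` for `π` (coefficients mapped to `E`). -/
def gammaE (c : ℤ_[p]) : PowerSeries E → PowerSeries E :=
  psSubst ((onePlusPiPow p c).map (algebraMap ℚ_[p] E) - 1)

end Efield

end

/-!
Let `u = ((1+π)^c - 1)/π`, a series with coefficients in `ℤ_p` and constant term the unit `c`.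
Since `φ` and `γ_c` commute (`((1+π)^p)^c = ((1+π)^c)^p`, a polynomial identity in `c` which holds
for `c ∈ ℕ`), applying `φ` to `π u = γ_c(π)` and `γ_c` to `π q = φ(π)` gives
`q φ(u) = u γ_c(q)`. Hence `φ^k(q) / γ_c(φ^k(q)) = φ^k(u) / φ^{k+1}(u)`, so for every partial
product `P` of `λ₊` or `λ₋` the quotient `P / γ_c(P)` lies in `1 + π ℤ_p[[π]]`. This property
passes to the coefficientwise limit, because inversion is coefficientwise continuous on series
with nonzero constant term.
-/

section Substitution

variable {A : Type*} [CommRing A]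

theorem coeff_pow_eq_zero_of_constantCoeff_eq_zero {g : A⟦X⟧} (hg : constantCoeff g = 0)
    {i j : ℕ} (hji : j < i) : coeff j (g ^ i) = 0 := by
  obtain ⟨g', rfl⟩ := X_dvd_iff.mpr hg
  rw [mul_pow, coeff_X_pow_mul', if_neg (by omega)]

theorem psSubst_eq_subst {g : A⟦X⟧} (hg : constantCoeff g = 0) (f : A⟦X⟧) :
    psSubst g f = f.subst g := by
  ext j
  rw [coeff_subst' (HasSubst.of_constantCoeff_zero' hg), psSubst, coeff_mk,
    finsum_eq_sum_of_support_subset _ (s := range (j + 1))]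
  · simp only [smul_eq_mul]
  · intro i hi
    rw [Function.mem_support] at hi
    rw [coe_range, Set.mem_Iio]
    by_contra h
    exact hi (by rw [coeff_pow_eq_zero_of_constantCoeff_eq_zero hg (by omega), smul_zero])

theorem constantCoeff_psSubst (g f : A⟦X⟧) : constantCoeff (psSubst g f) = constantCoeff f := by
  rw [← coeff_zero_eq_constantCoeff_apply, ← coeff_zero_eq_constantCoeff_apply, psSubst,
    coeff_mk]
  simp

theorem hasSubst_one_add_X_pow_sub_one (n : ℕ) : HasSubst ((1 + X) ^ n - 1 : A⟦X⟧) :=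
  HasSubst.of_constantCoeff_zero' (by simp)

theorem subst_one_add_X_pow {a : A⟦X⟧} (ha : HasSubst a) (m : ℕ) :
    ((1 + X) ^ m : A⟦X⟧).subst a = (1 + a) ^ m := by
  rw [← coe_substAlgHom ha, map_pow, map_add, map_one, coe_substAlgHom, subst_X ha]

end Substitution

theorem map_binomialSeries {R S : Type*} [CommRing R] [CommRing S] [BinomialRing R]
    [BinomialRing S] (f : R →+* S) (r : R) :
    (binomialSeries R r).map f = binomialSeries S (f r) := by
  ext n
  simp [Ring.map_choose]

theorem subst_binomialSeries_one_add_X_pow_sub_one {K : Type*} [Field K] [CharZero K]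
    (r : K) (n : ℕ) :
    (binomialSeries K r).subst ((1 + X) ^ n - 1 : K⟦X⟧) = binomialSeries K r ^ n := by
  have map_subst_eval (x : K) (F : (Polynomial K)⟦X⟧) :
      PowerSeries.map (Polynomial.evalRingHom x) (F.subst ((1 + X) ^ n - 1 : (Polynomial K)⟦X⟧))
        = (F.map (Polynomial.evalRingHom x)).subst ((1 + X) ^ n - 1 : K⟦X⟧) := by
    convert map_subst (hasSubst_one_add_X_pow_sub_one n) F using 2
    · rfl
    · change _ = PowerSeries.map _ _
      simp
  -- The identity for the indeterminate `T` of `K[T]`: its coefficients are polynomials in `T`,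
  -- and at `T = m ∈ ℕ` it reads `((1 + X) ^ n) ^ m = ((1 + X) ^ m) ^ n`.
  set T : Polynomial K := Polynomial.X
  have universal : (binomialSeries (Polynomial K) T).subst ((1 + X) ^ n - 1 : (Polynomial K)⟦X⟧)
      = binomialSeries (Polynomial K) T ^ n := by
    refine PowerSeries.ext fun j => Polynomial.eq_of_infinite_eval_eq _ _
      ((Set.infinite_range_of_injective (Nat.cast_injective (R := K))).mono ?_)
    rintro _ ⟨m, rfl⟩
    have eval_coeff (F : (Polynomial K)⟦X⟧) :
        (coeff j F).eval (m : K) = coeff j (F.map (Polynomial.evalRingHom (m : K))) := rfl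
    have eval_T : Polynomial.evalRingHom (m : K) T = m := Polynomial.eval_X
    rw [Set.mem_ofPred_eq, eval_coeff, eval_coeff, map_subst_eval, map_pow, map_binomialSeries,
      eval_T, binomialSeries_nat, subst_one_add_X_pow (hasSubst_one_add_X_pow_sub_one n),
      add_sub_cancel, ← pow_mul, ← pow_mul, mul_comm]
  have := congrArg (PowerSeries.map (Polynomial.evalRingHom r)) universal
  rwa [map_subst_eval, map_pow, map_binomialSeries, Polynomial.coe_evalRingHom,
    Polynomial.eval_X] at this

section Endomorphisms

variable (p : ℕ)

noncomputable def phiHom (A : Type*) [CommRing A] : A⟦X⟧ →ₐ[A] A⟦X⟧ :=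
  substAlgHom (hasSubst_one_add_X_pow_sub_one p)

theorem coe_phiHom (A : Type*) [CommRing A] : ⇑(phiHom p A) = phiA p A := by
  ext1 f
  rw [phiHom, coe_substAlgHom, phiA, psSubst_eq_subst (by simp)]

theorem phiA_X {A : Type*} [CommRing A] : phiA p A X = (1 + X) ^ p - 1 := by
  rw [← coe_phiHom, phiHom, substAlgHom_X]

variable [Fact p.Prime]

theorem binomC_eq_choose (c : ℤ_[p]) (n : ℕ) : binomC p c n = Ring.choose (c : ℚ_[p]) n := by
  have h := Ring.descPochhammer_eq_factorial_smul_choose (c : ℚ_[p]) n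
  rw [← Polynomial.aeval_eq_smeval, nsmul_eq_mul] at h
  rw [binomC, ← descPochhammer_map (algebraMap ℤ ℚ_[p]), Polynomial.eval_map_algebraMap, h,
    mul_div_cancel_left₀ _ (by exact_mod_cast n.factorial_ne_zero)]

theorem onePlusPiPow_eq_binomialSeries (c : ℤ_[p]) :
    onePlusPiPow p c = PowerSeries.binomialSeries ℚ_[p] (c : ℚ_[p]) := by
  ext n
  rw [onePlusPiPow, coeff_mk, binomC_eq_choose, binomialSeries_coeff, smul_eq_mul, mul_one]

theorem constantCoeff_onePlusPiPow (c : ℤ_[p]) : constantCoeff (onePlusPiPow p c) = 1 := by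
  rw [onePlusPiPow_eq_binomialSeries, binomialSeries_constantCoeff]

theorem constantCoeff_onePlusPiPow_sub_one (c : ℤ_[p]) :
    constantCoeff (onePlusPiPow p c - 1) = 0 := by
  rw [map_sub, constantCoeff_onePlusPiPow, map_one, sub_self]

theorem hasSubst_onePlusPiPow_sub_one (c : ℤ_[p]) : HasSubst (onePlusPiPow p c - 1) :=
  HasSubst.of_constantCoeff_zero' (constantCoeff_onePlusPiPow_sub_one p c)

noncomputable def gammaHom (c : ℤ_[p]) : ℚ_[p]⟦X⟧ →ₐ[ℚ_[p]] ℚ_[p]⟦X⟧ :=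
  substAlgHom (hasSubst_onePlusPiPow_sub_one p c)

theorem coe_gammaHom (c : ℤ_[p]) : ⇑(gammaHom p c) = gammaQ p c := by
  ext1 f
  rw [gammaHom, coe_substAlgHom, gammaQ, psSubst_eq_subst (constantCoeff_onePlusPiPow_sub_one p c)]

theorem gammaQ_X (c : ℤ_[p]) : gammaQ p c X = onePlusPiPow p c - 1 := by
  rw [← coe_gammaHom, gammaHom, substAlgHom_X]

theorem phiA_onePlusPiPow (c : ℤ_[p]) :
    phiA p ℚ_[p] (onePlusPiPow p c) = onePlusPiPow p c ^ p := by
  rw [← coe_phiHom, phiHom, coe_substAlgHom, onePlusPiPow_eq_binomialSeries,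
    subst_binomialSeries_one_add_X_pow_sub_one]

theorem phiA_gammaQ (c : ℤ_[p]) (f : ℚ_[p]⟦X⟧) :
    phiA p ℚ_[p] (gammaQ p c f) = gammaQ p c (phiA p ℚ_[p] f) := by
  have key : phiA p ℚ_[p] (onePlusPiPow p c - 1) = gammaQ p c ((1 + X) ^ p - 1) := by
    rw [← coe_phiHom, ← coe_gammaHom, map_sub, map_one, map_sub, map_pow, map_add, map_one,
      coe_phiHom, coe_gammaHom, phiA_onePlusPiPow, gammaQ_X, add_sub_cancel]
  simp only [← coe_phiHom, ← coe_gammaHom, phiHom, gammaHom, coe_substAlgHom] at key ⊢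
  rw [subst_comp_subst_apply (hasSubst_onePlusPiPow_sub_one p c)
      (hasSubst_one_add_X_pow_sub_one p),
    subst_comp_subst_apply (hasSubst_one_add_X_pow_sub_one p)
      (hasSubst_onePlusPiPow_sub_one p c), key]

end Endomorphisms

section Identity

variable (p : ℕ) [Fact p.Prime]

noncomputable def onePlusPiPowShift (c : ℤ_[p]) : ℚ_[p]⟦X⟧ :=
  mk fun n => coeff (n + 1) (onePlusPiPow p c)

theorem X_mul_onePlusPiPowShift (c : ℤ_[p]) :
    X * onePlusPiPowShift p c = onePlusPiPow p c - 1 := by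
  conv_rhs => rw [eq_X_mul_shift_add_const (onePlusPiPow p c), constantCoeff_onePlusPiPow,
    map_one, add_sub_cancel_right]
  rfl

theorem constantCoeff_onePlusPiPowShift (c : ℤ_[p]) :
    constantCoeff (onePlusPiPowShift p c) = c := by
  rw [onePlusPiPowShift, ← coeff_zero_eq_constantCoeff_apply, coeff_mk,
    onePlusPiPow_eq_binomialSeries, binomialSeries_coeff, Ring.choose_one_right, smul_eq_mul,
    mul_one]

variable {p}

theorem mul_phiA_onePlusPiPowShift {q : ℚ_[p]⟦X⟧} (hq : X * q = (1 + X) ^ p - 1)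
    (c : ℤ_[p]) :
    q * phiA p ℚ_[p] (onePlusPiPowShift p c) = onePlusPiPowShift p c * gammaQ p c q := by
  refine mul_left_cancel₀ X_ne_zero ?_
  calc X * (q * phiA p ℚ_[p] (onePlusPiPowShift p c))
      = phiA p ℚ_[p] X * phiA p ℚ_[p] (onePlusPiPowShift p c) := by
        rw [← mul_assoc, hq, phiA_X]
    _ = phiA p ℚ_[p] (gammaQ p c X) := by
        rw [← coe_phiHom, ← map_mul, X_mul_onePlusPiPowShift, gammaQ_X]
    _ = gammaQ p c (phiA p ℚ_[p] X) := phiA_gammaQ p c X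
    _ = gammaQ p c X * gammaQ p c q := by rw [phiA_X, ← hq, ← coe_gammaHom, map_mul]
    _ = X * (onePlusPiPowShift p c * gammaQ p c q) := by
        rw [gammaQ_X, ← X_mul_onePlusPiPowShift, mul_assoc]

theorem iterate_mul_phiA_onePlusPiPowShift {q : ℚ_[p]⟦X⟧} (hq : X * q = (1 + X) ^ p - 1)
    (c : ℤ_[p]) (k : ℕ) :
    (phiA p ℚ_[p])^[k] q * (phiA p ℚ_[p])^[k + 1] (onePlusPiPowShift p c)
      = (phiA p ℚ_[p])^[k] (onePlusPiPowShift p c) * gammaQ p c ((phiA p ℚ_[p])^[k] q) := by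
  have h := congrArg (phiHom p ℚ_[p] ^ k) (mul_phiA_onePlusPiPowShift hq c)
  rwa [map_mul, map_mul, AlgHom.coe_pow, coe_phiHom, ← Function.iterate_succ_apply,
    (Function.Commute.iterate_left (phiA_gammaQ p c) k) q] at h

end Identity

section Integrality

variable (p : ℕ) [Fact p.Prime]

def intSubring : Subring ℚ_[p]⟦X⟧ where
  carrier := {f | IntSeries p f}
  mul_mem' {f g} hf hg n := by
    rw [coeff_mul]
    exact sum_mem fun ab _ => (PadicInt.subring p).mul_mem (hf ab.1) (hg ab.2)
  one_mem' n := by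
    rw [coeff_one]
    split_ifs
    exacts [(PadicInt.subring p).one_mem, (PadicInt.subring p).zero_mem]
  add_mem' {f g} hf hg n := by
    rw [map_add]
    exact (PadicInt.subring p).add_mem (hf n) (hg n)
  zero_mem' n := by
    rw [map_zero]
    exact (PadicInt.subring p).zero_mem
  neg_mem' {f} hf n := by
    rw [map_neg]
    exact (PadicInt.subring p).neg_mem (hf n)

variable {p}

theorem IntSeries.psSubst {g f : ℚ_[p]⟦X⟧} (hg : IntSeries p g) (hf : IntSeries p f) :
    IntSeries p (psSubst g f) := fun n => by
  rw [_root_.psSubst, coeff_mk]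
  exact sum_mem fun i _ =>
    (PadicInt.subring p).mul_mem (hf i) ((intSubring p).pow_mem hg i n)

theorem IntSeries.inv {f : ℚ_[p]⟦X⟧} (hf : IntSeries p f) (h0 : ‖constantCoeff f‖ = 1) :
    IntSeries p f⁻¹ := by
  intro n
  induction n using Nat.strong_induction_on with
  | _ n ih =>
    rw [coeff_inv]
    split_ifs with hn
    · rw [norm_inv, h0, inv_one]
    · refine (PadicInt.subring p).mul_mem ?_ (sum_mem fun ab _ => ?_)
      · rw [PadicInt.mem_subring_iff, norm_neg, norm_inv, h0, inv_one]
      split_ifs with hab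
      exacts [(PadicInt.subring p).mul_mem (hf ab.1) (ih ab.2 hab),
        (PadicInt.subring p).zero_mem]

theorem intSeries_one_add_X_pow_sub_one : IntSeries p ((1 + X) ^ p - 1) :=
  (intSubring p).sub_mem ((intSubring p).pow_mem ((intSubring p).add_mem (intSubring p).one_mem
    fun n => by rw [coeff_X]; split_ifs <;> simp) p) (intSubring p).one_mem

theorem IntSeries.phiA_iterate {f : ℚ_[p]⟦X⟧} (hf : IntSeries p f) (k : ℕ) :
    IntSeries p ((phiA p ℚ_[p])^[k] f) := by
  induction k with
  | zero => exact hf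
  | succ k ih =>
    rw [Function.iterate_succ_apply']
    exact intSeries_one_add_X_pow_sub_one.psSubst ih

theorem intSeries_onePlusPiPowShift (c : ℤ_[p]) : IntSeries p (onePlusPiPowShift p c) :=
    fun n => by
  rw [onePlusPiPowShift, coeff_mk, onePlusPiPow_eq_binomialSeries, binomialSeries_coeff,
    smul_eq_mul, mul_one]
  change ‖Ring.choose (PadicInt.Coe.ringHom c) (n + 1)‖ ≤ 1
  rw [← Ring.map_choose]
  exact PadicInt.norm_le_one _

end Integrality

section Limits

variable {p : ℕ} [Fact p.Prime] {F G : ℕ → ℚ_[p]⟦X⟧} {L M : ℚ_[p]⟦X⟧}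

theorem CoeffTendsto.mul (hF : CoeffTendsto p F L) (hG : CoeffTendsto p G M) :
    CoeffTendsto p (fun N => F N * G N) (L * M) := fun d => by
  simp only [coeff_mul]
  exact tendsto_finsetSum _ fun ab _ => (hF ab.1).mul (hG ab.2)

theorem CoeffTendsto.psSubst (g : ℚ_[p]⟦X⟧) (hF : CoeffTendsto p F L) :
    CoeffTendsto p (fun N => psSubst g (F N)) (psSubst g L) := fun d => by
  simp only [_root_.psSubst, coeff_mk]
  exact tendsto_finsetSum _ fun i _ => (hF i).mul_const _

theorem CoeffTendsto.inv (hF : CoeffTendsto p F L) (hL : constantCoeff L ≠ 0) :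
    CoeffTendsto p (fun N => (F N)⁻¹) L⁻¹ := by
  have hF0 : Tendsto (fun N => constantCoeff (F N)) atTop (nhds (constantCoeff L)) := by
    simpa only [coeff_zero_eq_constantCoeff_apply] using hF 0
  intro d
  induction d using Nat.strong_induction_on with
  | _ d ih =>
    simp only [coeff_inv d]
    split_ifs
    · exact hF0.inv₀ hL
    · refine (hF0.inv₀ hL).neg.mul (tendsto_finsetSum _ fun ab _ => ?_)
      split_ifs with hab
      exacts [(hF ab.1).mul (ih ab.2 hab), tendsto_const_nhds]

theorem CoeffTendsto.intSeries (hF : CoeffTendsto p F L) (hint : ∀ N, IntSeries p (F N)) :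
    IntSeries p L := fun d =>
  le_of_tendsto (hF d).norm (Eventually.of_forall fun N => hint N d)

theorem CoeffTendsto.constantCoeff_eq {a : ℚ_[p]} (hF : CoeffTendsto p F L)
    (ha : ∀ N, constantCoeff (F N) = a) : constantCoeff L = a := by
  simp only [← coeff_zero_eq_constantCoeff_apply] at ha ⊢
  exact tendsto_nhds_unique (hF 0) (by simp only [ha]; exact tendsto_const_nhds)

end Limits

section Telescoping

variable {p : ℕ} [Fact p.Prime]

theorem constantCoeff_phiA_iterate (f : ℚ_[p]⟦X⟧) (k : ℕ) :
    constantCoeff ((phiA p ℚ_[p])^[k] f) = constantCoeff f := by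
  induction k with
  | zero => rfl
  | succ k ih => rw [Function.iterate_succ_apply', ← ih]; exact constantCoeff_psSubst _ _

theorem constantCoeff_eq_of_X_mul_eq {q : ℚ_[p]⟦X⟧} (hq : X * q = (1 + X) ^ p - 1) :
    constantCoeff q = p := by
  have h := congrArg (coeff 1) hq
  rwa [coeff_succ_X_mul, coeff_zero_eq_constantCoeff_apply, map_sub,
    ← binomialSeries_nat (R := ℤ), binomialSeries_coeff, Ring.choose_one_right, coeff_one,
    if_neg one_ne_zero, sub_zero, zsmul_one, Int.cast_natCast] at h

variable (p) in
noncomputable def partialProd (q : ℚ_[p]⟦X⟧) (m : ℕ → ℕ) (N : ℕ) : ℚ_[p]⟦X⟧ :=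
  ∏ n ∈ range (N + 1), (p : ℚ_[p])⁻¹ • (phiA p ℚ_[p])^[m n] q

theorem constantCoeff_partialProd {q : ℚ_[p]⟦X⟧} (hq : X * q = (1 + X) ^ p - 1) (m : ℕ → ℕ)
    (N : ℕ) : constantCoeff (partialProd p q m N) = 1 := by
  rw [partialProd, map_prod]
  refine prod_eq_one fun n _ => ?_
  rw [constantCoeff_smul, constantCoeff_phiA_iterate, constantCoeff_eq_of_X_mul_eq hq,
    smul_eq_mul, inv_mul_cancel₀ (Nat.cast_ne_zero.mpr (Fact.out : p.Prime).ne_zero)]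

variable (p) in
noncomputable def shiftRatio (c : ℤ_[p]) (k : ℕ) : ℚ_[p]⟦X⟧ :=
  (phiA p ℚ_[p])^[k] (onePlusPiPowShift p c) *
    ((phiA p ℚ_[p])^[k + 1] (onePlusPiPowShift p c))⁻¹

theorem constantCoeff_phiA_iterate_onePlusPiPowShift (c : ℤ_[p]) (k : ℕ) :
    constantCoeff ((phiA p ℚ_[p])^[k] (onePlusPiPowShift p c)) = c := by
  rw [constantCoeff_phiA_iterate, constantCoeff_onePlusPiPowShift]

theorem shiftRatio_mul_gammaQ {q : ℚ_[p]⟦X⟧} (hq : X * q = (1 + X) ^ p - 1) {c : ℤ_[p]}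
    (hc : c ≠ 0) (k : ℕ) :
    shiftRatio p c k * gammaQ p c ((phiA p ℚ_[p])^[k] q) = (phiA p ℚ_[p])^[k] q := by
  have h : constantCoeff ((phiA p ℚ_[p])^[k + 1] (onePlusPiPowShift p c)) ≠ 0 := by
    rwa [constantCoeff_phiA_iterate_onePlusPiPowShift, PadicInt.coe_ne_zero]
  rw [shiftRatio, mul_right_comm, ← iterate_mul_phiA_onePlusPiPowShift hq c k, mul_assoc,
    PowerSeries.mul_inv_cancel _ h, mul_one]

theorem partialProd_mul_inv_gammaQ {q : ℚ_[p]⟦X⟧} (hq : X * q = (1 + X) ^ p - 1)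
    {c : ℤ_[p]} (hc : c ≠ 0) (m : ℕ → ℕ) (N : ℕ) :
    partialProd p q m N * (gammaQ p c (partialProd p q m N))⁻¹
      = ∏ n ∈ range (N + 1), shiftRatio p c (m n) := by
  refine ((eq_mul_inv_iff_mul_eq ?_).mpr ?_).symm
  · rw [gammaQ, constantCoeff_psSubst, constantCoeff_partialProd hq]
    exact one_ne_zero
  · rw [partialProd, ← coe_gammaHom, map_prod, ← prod_mul_distrib]
    refine prod_congr rfl fun n _ => ?_
    rw [map_smul, coe_gammaHom, mul_smul_comm, shiftRatio_mul_gammaQ hq hc]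

theorem intSeries_shiftRatio (c : ℤ_[p]ˣ) (k : ℕ) : IntSeries p (shiftRatio p c k) := by
  have hint (j : ℕ) := (intSeries_onePlusPiPowShift (c : ℤ_[p])).phiA_iterate j
  refine (intSubring p).mul_mem (hint k) ((hint (k + 1)).inv ?_)
  rw [constantCoeff_phiA_iterate_onePlusPiPowShift]
  exact PadicInt.norm_units c

theorem constantCoeff_shiftRatio {c : ℤ_[p]} (hc : c ≠ 0) (k : ℕ) :
    constantCoeff (shiftRatio p c k) = 1 := by
  rw [shiftRatio, map_mul, constantCoeff_inv, constantCoeff_phiA_iterate_onePlusPiPowShift,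
    constantCoeff_phiA_iterate_onePlusPiPowShift, mul_inv_cancel₀ (PadicInt.coe_ne_zero.mpr hc)]

end Telescoping

theorem intSeries_mul_inv_gammaQ_of_coeffTendsto {p : ℕ} [Fact p.Prime] {q : ℚ_[p]⟦X⟧}
    (hq : X * q = (1 + X) ^ p - 1) (c : ℤ_[p]ˣ) (m : ℕ → ℕ) {L : ℚ_[p]⟦X⟧}
    (hL : CoeffTendsto p (partialProd p q m) L) :
    IntSeries p (L * (gammaQ p c L)⁻¹) ∧ constantCoeff (L * (gammaQ p c L)⁻¹) = 1 := by
  have hγ : CoeffTendsto p (fun N => gammaQ p c (partialProd p q m N)) (gammaQ p c L) :=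
    hL.psSubst _
  have hγ0 : constantCoeff (gammaQ p c L) ≠ 0 := by
    rw [gammaQ, constantCoeff_psSubst, hL.constantCoeff_eq (constantCoeff_partialProd hq m)]
    exact one_ne_zero
  have hS : CoeffTendsto p (fun N => ∏ n ∈ range (N + 1), shiftRatio p c (m n))
      (L * (gammaQ p c L)⁻¹) := by
    simpa only [partialProd_mul_inv_gammaQ hq c.ne_zero] using hL.mul (hγ.inv hγ0)
  exact ⟨hS.intSeries fun N => (intSubring p).prod_mem fun n _ => intSeries_shiftRatio c (m n),
    hS.constantCoeff_eq fun N =>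
      (map_prod _ _ _).trans (prod_eq_one fun n _ => constantCoeff_shiftRatio c.ne_zero (m n))⟩

theorem statement4 (p : ℕ) [Fact p.Prime]
    (q : PowerSeries ℚ_[p]) (hq : PowerSeries.X * q = (1 + PowerSeries.X) ^ p - 1)
    (lamPlus lamMinus : PowerSeries ℚ_[p])
    (hplus : CoeffTendsto p (partialPlus p q) lamPlus)
    (hminus : CoeffTendsto p (partialMinus p q) lamMinus)
    (c : ℤ_[p]ˣ) :
    (IntSeries p (lamPlus * (gammaQ p c lamPlus)⁻¹) ∧
      PowerSeries.constantCoeff (R := ℚ_[p]) (lamPlus * (gammaQ p c lamPlus)⁻¹) = 1) ∧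
    (IntSeries p (lamMinus * (gammaQ p c lamMinus)⁻¹) ∧
      PowerSeries.constantCoeff (R := ℚ_[p]) (lamMinus * (gammaQ p c lamMinus)⁻¹) = 1) :=
  ⟨intSeries_mul_inv_gammaQ_of_coeffTendsto hq c (fun n => 2 * n + 1) hplus,
    intSeries_mul_inv_gammaQ_of_coeffTendsto hq c (fun n => 2 * n) hminus⟩
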